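/- Let ∇ be an L-connection on E and ψ an element of the Hom-gauge group with inverse [ψ]⁻¹ = φ_E∘ψ⁻¹∘φ_E. Then the gauge-transformed map ∇^ψ := (id ⊗ ([ψ]⁻¹∘φ_E⁻¹)) ∘ ∇ ∘ (φ_E⁻¹∘ψ) again satisfies the twisted Leibniz rule ∇^ψ(fs) = d_L(f)·φ_E(s) + φ*(f)·∇^ψ(s), i.e. ∇^ψ is an L-connection. -/

import Mathlib

/-! The gauge transform is `D` precomposed with the `A`-linear map `φ_E⁻¹ ∘ ψ` and postcomposed
with `id ⊗ H`, where `H = [ψ]⁻¹ ∘ φ_E⁻¹`. Linearity of `φ_E⁻¹ ∘ ψ` lets the Leibniz rule of `D`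
pass through unchanged, and the identity `H ∘ φ_E ∘ φ_E⁻¹ ∘ ψ = φ_E` restores the term
`d_L(f) ⊗ φ_E(s)`. -/

section

variable {A E L N : Type*} [SMul A E] [Add N] [SMul A N]

def IsLConnection (φs : A → A) (φE : E → E) (dL : A → L) (tens : L → E → N) (D : E → N) :
    Prop :=
  ∀ (f : A) (s : E), D (f • s) = tens (dL f) (φE s) + φs f • D s

theorem Equiv.symm_map_smul_of_map_smul (e : E ≃ E) {σ : A → A}
    (he : ∀ (f : A) (s : E), e (f • s) = σ f • e s) (f : A) (s : E) :
    e.symm (σ f • s) = f • e.symm s :=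
  e.injective (by rw [he, Equiv.apply_symm_apply, Equiv.apply_symm_apply])

theorem IsLConnection.gaugeTransform {φs : A → A} {φE : E → E} {dL : A → L}
    {tens : L → E → N} {D : E → N} (hD : IsLConnection φs φE dL tens D)
    {g H : E → E} (hg : ∀ (f : A) (s : E), g (f • s) = f • g s)
    (hH : ∀ s, H (φE (g s)) = φE s) {ext : (E → E) → N → N}
    (hext_tens : ∀ (h : E → E) (l : L) (e : E), ext h (tens l e) = tens l (h e))
    (hext_add : ∀ (h : E → E) (n m : N), ext h (n + m) = ext h n + ext h m)
    (hext_smul : ∀ (h : E → E) (a : A) (n : N), ext h (a • n) = a • ext h n) :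
    IsLConnection φs φE dL tens (fun s => ext H (D (g s))) := by
  intro f s
  dsimp only
  rw [hg, hD, hext_add, hext_smul, hext_tens, hH]

end

theorem gauge_transform_is_connection_general {A E L N : Type*} [CommRing A]
    [AddCommGroup E] [Module A E] [AddCommGroup N] [Module A N]
    (φs : A ≃+* A) (φE : E ≃ E)
    (hφE : ∀ (f : A) (s : E), φE (f • s) = φs f • φE s)
    (dL : A → L) (tens : L → E → N)
    (ext : (E → E) → N → N)
    (hext_tens : ∀ (h : E → E) (l : L) (e : E), ext h (tens l e) = tens l (h e))
    (hext_add : ∀ (h : E → E) (n m : N), ext h (n + m) = ext h n + ext h m)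
    (hext_smul : ∀ (h : E → E) (a : A) (n : N), ext h (a • n) = a • ext h n)
    (ψ : E ≃ E)
    (hψ : ∀ (f : A) (s : E), ψ (f • s) = φs f • ψ s)
    (D : E → N)
    (hD : ∀ (f : A) (s : E), D (f • s) = tens (dL f) (φE s) + φs f • D s) :
    ∀ (f : A) (s : E),
      (fun t => ext ((⇑φE ∘ ⇑ψ.symm ∘ ⇑φE) ∘ ⇑φE.symm) (D (φE.symm (ψ t)))) (f • s)
        = tens (dL f) (φE s)
          + φs f • (fun t => ext ((⇑φE ∘ ⇑ψ.symm ∘ ⇑φE) ∘ ⇑φE.symm) (D (φE.symm (ψ t)))) s := by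
  have hlinear : ∀ (f : A) (s : E), φE.symm (ψ (f • s)) = f • φE.symm (ψ s) := fun f s => by
    rw [hψ, φE.symm_map_smul_of_map_smul hφE]
  exact IsLConnection.gaugeTransform (g := fun t => φE.symm (ψ t)) hD hlinear (by simp)
    hext_tens hext_add hext_smul

/-- the gauge transform
∇^ψ = (id ⊗ ([ψ]⁻¹∘φ_E⁻¹)) ∘ ∇ ∘ (φ_E⁻¹∘ψ) of an L-connection ∇ satisfies the
twisted Leibniz rule, hence is again an L-connection.  Here `tens` models simple
tensors in Γ(L*⊗E) and `ext h` models the operator id_{L*} ⊗ h. -/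
theorem gauge_transform_is_connection {A E L N : Type*} [CommRing A]
    [AddCommGroup E] [Module A E] [AddCommGroup N] [Module A N]
    (φs : A ≃+* A) (φE : E ≃ E)
    (hφE_add : ∀ a b : E, φE (a + b) = φE a + φE b)
    (hφE : ∀ (f : A) (s : E), φE (f • s) = φs f • φE s)
    (dL : A → L) (tens : L → E → N)
    (ext : (E → E) → N → N)
    (hext_tens : ∀ (h : E → E) (l : L) (e : E), ext h (tens l e) = tens l (h e))
    (hext_add : ∀ (h : E → E) (n m : N), ext h (n + m) = ext h n + ext h m)
    (hext_smul : ∀ (h : E → E) (a : A) (n : N), ext h (a • n) = a • ext h n)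
    (ψ : E ≃ E)
    (hψ : ∀ (f : A) (s : E), ψ (f • s) = φs f • ψ s)
    (D : E → N)
    (hD : ∀ (f : A) (s : E), D (f • s) = tens (dL f) (φE s) + φs f • D s) :
    ∀ (f : A) (s : E),
      (fun t => ext ((⇑φE ∘ ⇑ψ.symm ∘ ⇑φE) ∘ ⇑φE.symm) (D (φE.symm (ψ t)))) (f • s)
        = tens (dL f) (φE s)
          + φs f • (fun t => ext ((⇑φE ∘ ⇑ψ.symm ∘ ⇑φE) ∘ ⇑φE.symm) (D (φE.symm (ψ t)))) s :=
  gauge_transform_is_connection_general φs φE hφE dL tens ext hext_tens hext_add hext_smul ψ hψ D hD
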